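/- Let R be a left-symmetric conformal algebra, Q a ℂ[∂]-module, E = R ⊕ Q the direct sum of ℂ[∂]-modules, and 𝔏(R,Q) the set of all left-symmetric conformal extending structures of R by Q. Then the assignment sending an extending structure Ω(R,Q) to the unified product structure (R♮Q, ·_λ·) on E induces a well-defined bijection from the quotient 𝓗²_R(Q,R) := 𝔏(R,Q)/≡ onto CExtd(E,R), the set of equivalence classes (under equivalence stabilizing R) of left-symmetric conformal algebra structures on E containing R as a subalgebra. -/
import Mathlib


open Finsupp Polynomial

noncomputable section

/-- One-variable conformal polynomials in λ with coefficients in `W`: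
the coefficient of `λ^n` sits at index `n`. -/
abbrev OP (W : Type*) [Zero W] := ℕ →₀ W

/-- Two-variable conformal polynomials in λ, μ with coefficients in `W`. -/
abbrev TP (W : Type*) [Zero W] := (ℕ × ℕ) →₀ W

section Defs

variable {U V W L : Type*}
variable [AddCommGroup U] [Module ℂ U] [AddCommGroup V] [Module ℂ V]
variable [AddCommGroup W] [Module ℂ W] [AddCommGroup L] [Module ℂ L]

/-- Multiplication by the variable λ on one-variable polynomials. -/
def lsh : OP W →ₗ[ℂ] OP W := Finsupp.lmapDomain W ℂ (· + 1)

/-- Multiplication by λ on two-variable polynomials. -/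
def LX : TP W →ₗ[ℂ] TP W := Finsupp.lmapDomain W ℂ (fun p => (p.1 + 1, p.2))

/-- Multiplication by μ on two-variable polynomials. -/
def LY : TP W →ₗ[ℂ] TP W := Finsupp.lmapDomain W ℂ (fun p => (p.1, p.2 + 1))

/-- Coefficientwise action of ∂ on one-variable polynomials. -/
def pD (dW : W →ₗ[ℂ] W) : OP W →ₗ[ℂ] OP W := Finsupp.mapRange.linearMap dW

/-- Coefficientwise action of ∂ on two-variable polynomials. -/
def PD (dW : W →ₗ[ℂ] W) : TP W →ₗ[ℂ] TP W := Finsupp.mapRange.linearMap dW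

/-- The operator −λ−∂ on one-variable polynomials. -/
def nD (dW : W →ₗ[ℂ] W) : OP W →ₗ[ℂ] OP W := -lsh - pD dW

/-- The operator −λ−∂ on two-variable polynomials. -/
def nX (dW : W →ₗ[ℂ] W) : TP W →ₗ[ℂ] TP W := -LX - PD dW

/-- The operator −μ−∂ on two-variable polynomials. -/
def nY (dW : W →ₗ[ℂ] W) : TP W →ₗ[ℂ] TP W := -LY - PD dW

/-- The operator −λ−μ−∂ on two-variable polynomials. -/
def nXY (dW : W →ₗ[ℂ] W) : TP W →ₗ[ℂ] TP W := -LX - LY - PD dW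

/-- Substitution of a (commuting) operator `A` for the variable of a one-variable
polynomial, with values in two-variable polynomials. -/
def evA (A : TP W →ₗ[ℂ] TP W) : OP W →ₗ[ℂ] TP W :=
  Finsupp.lsum ℂ (fun k => (A ^ k) ∘ₗ Finsupp.lsingle ((0, 0) : ℕ × ℕ))

/-- Substitution of an operator `A` for the variable of a one-variable polynomial. -/
def evA1 (A : OP W →ₗ[ℂ] OP W) : OP W →ₗ[ℂ] OP W :=
  Finsupp.lsum ℂ (fun k => (A ^ k) ∘ₗ Finsupp.lsingle (0 : ℕ))

/-- `u_A v`: the pairing `m` evaluated with the variable replaced by the operator `A`. -/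
def ev2 (m : U →ₗ[ℂ] V →ₗ[ℂ] OP W) (A : TP W →ₗ[ℂ] TP W) (u : U) (v : V) : TP W :=
  evA A (m u v)

/-- Extension of the pairing `m`, in its first argument, to two-variable polynomials. -/
def exL (m : U →ₗ[ℂ] V →ₗ[ℂ] OP W) (A : TP W →ₗ[ℂ] TP W) (p : TP U) (v : V) : TP W :=
  Finsupp.sum p fun ij u => (LX ^ ij.1) ((LY ^ ij.2) (evA A (m u v)))

/-- Extension of the pairing `m`, in its second argument, to two-variable polynomials. -/
def exR (m : U →ₗ[ℂ] V →ₗ[ℂ] OP W) (A : TP W →ₗ[ℂ] TP W) (u : U) (p : TP V) : TP W :=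
  Finsupp.sum p fun ij v => (LX ^ ij.1) ((LY ^ ij.2) (evA A (m u v)))

/-- Extension of a unary conformal-linear map to two-variable polynomials. -/
def exU (D : U →ₗ[ℂ] OP W) (A : TP W →ₗ[ℂ] TP W) (p : TP U) : TP W :=
  Finsupp.sum p fun ij u => (LX ^ ij.1) ((LY ^ ij.2) (evA A (D u)))

/-- Coefficientwise application of a linear map to a one-variable polynomial. -/
def pMap (f : U →ₗ[ℂ] W) : OP U →ₗ[ℂ] OP W := Finsupp.mapRange.linearMap f

/-- A conformal bilinear map: `f(∂u, v) = −λ f(u,v)` and `f(u, ∂v) = (λ+∂) f(u,v)`. -/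
structure ConfBilin (dU : U →ₗ[ℂ] U) (dV : V →ₗ[ℂ] V) (dW : W →ₗ[ℂ] W)
    (m : U →ₗ[ℂ] V →ₗ[ℂ] OP W) : Prop where
  dleft : ∀ u v, m (dU u) v = -lsh (m u v)
  dright : ∀ u v, m u (dV v) = lsh (m u v) + pD dW (m u v)

/-- A left-symmetric conformal algebra structure on the ℂ[∂]-module `(L, dL)`. -/
structure IsLSCA (dL : L →ₗ[ℂ] L) (m : L →ₗ[ℂ] L →ₗ[ℂ] OP L) : Prop where
  conf : ConfBilin dL dL dL m
  lsym : ∀ a b c : L,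
    exL m (LX + LY) (ev2 m LX a b) c - exR m LX a (ev2 m LY b c)
      = exL m (LX + LY) (ev2 m LY b a) c - exR m LY b (ev2 m LX a c)

/-- The commutator λ-bracket `[u_λ v] = u_λ v − v_{−λ−∂} u`. -/
def commut (dL : L →ₗ[ℂ] L) (m : L →ₗ[ℂ] L →ₗ[ℂ] OP L) : L →ₗ[ℂ] L →ₗ[ℂ] OP L :=
  m - (m.compr₂ (evA1 (nD dL))).flip

/-- A Lie conformal algebra structure on the ℂ[∂]-module `(L, dL)`. -/
structure IsLieCA (dL : L →ₗ[ℂ] L) (br : L →ₗ[ℂ] L →ₗ[ℂ] OP L) : Prop where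
  dleft : ∀ u v, br (dL u) v = -lsh (br u v)
  dright : ∀ u v, br u (dL v) = lsh (br u v) + pD dL (br u v)
  skew : ∀ u v, br u v = -evA1 (nD dL) (br v u)
  jacobi : ∀ a b c : L,
    exR br LX a (ev2 br LY b c)
      = exL br (LX + LY) (ev2 br LX a b) c + exR br LY b (ev2 br LX a c)

end Defs

section Ext

variable {R Q : Type*} [AddCommGroup R] [Module ℂ R] [AddCommGroup Q] [Module ℂ Q]

/-- An extending datum of a left-symmetric conformal algebra `R` by a ℂ[∂]-module `Q`. -/
structure ExtDatum (dR : R →ₗ[ℂ] R) (dQ : Q →ₗ[ℂ] Q) where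
  phi : Q →ₗ[ℂ] R →ₗ[ℂ] OP R
  psi : Q →ₗ[ℂ] R →ₗ[ℂ] OP R
  l : R →ₗ[ℂ] Q →ₗ[ℂ] OP Q
  r : R →ₗ[ℂ] Q →ₗ[ℂ] OP Q
  g : Q →ₗ[ℂ] Q →ₗ[ℂ] OP R
  o : Q →ₗ[ℂ] Q →ₗ[ℂ] OP Q
  hphi : ConfBilin dQ dR dR phi
  hpsi : ConfBilin dQ dR dR psi
  hl : ConfBilin dR dQ dQ l
  hr : ConfBilin dR dQ dQ r
  hg : ConfBilin dQ dQ dR g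
  ho : ConfBilin dQ dQ dQ o

/-- Embedding of `R`-valued polynomials into `(R ⊕ Q)`-valued polynomials. -/
def inlP (R Q : Type*) [AddCommGroup R] [Module ℂ R] [AddCommGroup Q] [Module ℂ Q] :
    OP R →ₗ[ℂ] OP (R × Q) := Finsupp.mapRange.linearMap (LinearMap.inl ℂ R Q)

/-- Embedding of `Q`-valued polynomials into `(R ⊕ Q)`-valued polynomials. -/
def inrP (R Q : Type*) [AddCommGroup R] [Module ℂ R] [AddCommGroup Q] [Module ℂ Q] :
    OP Q →ₗ[ℂ] OP (R × Q) := Finsupp.mapRange.linearMap (LinearMap.inr ℂ R Q)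

/-- The λ-product of the unified product `R ♮ Q`:
`(a+x) _λ (b+y) = (a_λ b + φ(x)_λ b + ψ(y)_{−λ−∂} a + g_λ(x,y)) + (x∘_λ y + l(a)_λ y + r(b)_{−λ−∂} x)`. -/
def uprod (dR : R →ₗ[ℂ] R) (dQ : Q →ₗ[ℂ] Q) (Ω : ExtDatum dR dQ)
    (m : R →ₗ[ℂ] R →ₗ[ℂ] OP R) :
    (R × Q) →ₗ[ℂ] (R × Q) →ₗ[ℂ] OP (R × Q) :=
  ((m.compl₁₂ (LinearMap.fst ℂ R Q) (LinearMap.fst ℂ R Q)).compr₂ (inlP R Q))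
    + ((Ω.phi.compl₁₂ (LinearMap.snd ℂ R Q) (LinearMap.fst ℂ R Q)).compr₂ (inlP R Q))
    + (((Ω.psi.compl₁₂ (LinearMap.snd ℂ R Q) (LinearMap.fst ℂ R Q)).compr₂
        (inlP R Q ∘ₗ evA1 (nD dR))).flip)
    + ((Ω.g.compl₁₂ (LinearMap.snd ℂ R Q) (LinearMap.snd ℂ R Q)).compr₂ (inlP R Q))
    + ((Ω.o.compl₁₂ (LinearMap.snd ℂ R Q) (LinearMap.snd ℂ R Q)).compr₂ (inrP R Q))
    + ((Ω.l.compl₁₂ (LinearMap.fst ℂ R Q) (LinearMap.snd ℂ R Q)).compr₂ (inrP R Q))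
    + (((Ω.r.compl₁₂ (LinearMap.fst ℂ R Q) (LinearMap.snd ℂ R Q)).compr₂
        (inrP R Q ∘ₗ evA1 (nD dQ))).flip)

lemma uprod_apply (dR : R →ₗ[ℂ] R) (dQ : Q →ₗ[ℂ] Q) (Ω : ExtDatum dR dQ)
    (m : R →ₗ[ℂ] R →ₗ[ℂ] OP R) (e₁ e₂ : R × Q) :
    uprod dR dQ Ω m e₁ e₂ =
      inlP R Q (m e₁.1 e₂.1 + Ω.phi e₁.2 e₂.1 + evA1 (nD dR) (Ω.psi e₂.2 e₁.1) + Ω.g e₁.2 e₂.2)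
      + inrP R Q (Ω.o e₁.2 e₂.2 + Ω.l e₁.1 e₂.2 + evA1 (nD dQ) (Ω.r e₂.1 e₁.2)) := by
  simp [uprod, LinearMap.add_apply, LinearMap.compr₂_apply, LinearMap.compl₁₂_apply,
    LinearMap.flip_apply, map_add, LinearMap.comp_apply]
  abel

lemma uprod_res (dR : R →ₗ[ℂ] R) (dQ : Q →ₗ[ℂ] Q) (Ω : ExtDatum dR dQ)
    (m : R →ₗ[ℂ] R →ₗ[ℂ] OP R) (a b : R) :
    uprod dR dQ Ω m (a, (0 : Q)) (b, 0) = inlP R Q (m a b) := by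
  rw [uprod_apply]
  simp

/-- Isomorphism property of left-symmetric conformal algebra structures, via
a ℂ[∂]-module automorphism `T` of the underlying module `E`. -/
structure IsIsoLSCA {E : Type*} [AddCommGroup E] [Module ℂ E] (dE : E →ₗ[ℂ] E)
    (m₁ m₂ : E →ₗ[ℂ] E →ₗ[ℂ] OP E) (T : E ≃ₗ[ℂ] E) : Prop where
  dcomm : ∀ e, T (dE e) = dE (T e)
  mult : ∀ u v, m₂ (T u) (T v) = pMap (T : E →ₗ[ℂ] E) (m₁ u v)

/-- `T` stabilizes `R`, i.e. `T ∘ i = i` for the inclusion `i : R → R ⊕ Q`. -/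
def Stab (T : (R × Q) ≃ₗ[ℂ] (R × Q)) : Prop := ∀ a : R, T (a, 0) = (a, 0)

/-- `T` co-stabilizes `Q`, i.e. `π ∘ T = π` for the projection `π : R ⊕ Q → Q`. -/
def Costab (T : (R × Q) ≃ₗ[ℂ] (R × Q)) : Prop := ∀ e, (T e).2 = e.2

end Ext

section Equivalences

variable {R Q : Type*} [AddCommGroup R] [Module ℂ R] [AddCommGroup Q] [Module ℂ Q]

/-- The compatibility conditions (3.9)–(3.14) of Definition 3.10, relating the extending
structures `Ω` and `Ω'` through the pair of ℂ[∂]-module maps `(u, v)`. -/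
def DatumRel (dR : R →ₗ[ℂ] R) (dQ : Q →ₗ[ℂ] Q) (m : R →ₗ[ℂ] R →ₗ[ℂ] OP R)
    (Ω Ω' : ExtDatum dR dQ) (u : Q →ₗ[ℂ] R) (v : Q →ₗ[ℂ] Q) : Prop :=
  (∀ (a : R) (x : Q), evA1 (nD dR) (Ω.psi x a) + pMap u (Ω.l a x)
      = m a (u x) + evA1 (nD dR) (Ω'.psi (v x) a)) ∧
  (∀ (a : R) (x : Q), pMap v (Ω.l a x) = Ω'.l a (v x)) ∧
  (∀ (a : R) (x : Q), Ω.phi x a + pMap u (evA1 (nD dQ) (Ω.r a x))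
      = m (u x) a + Ω'.phi (v x) a) ∧
  (∀ (a : R) (x : Q), pMap v (evA1 (nD dQ) (Ω.r a x)) = evA1 (nD dQ) (Ω'.r a (v x))) ∧
  (∀ x y : Q, Ω.g x y + pMap u (Ω.o x y)
      = m (u x) (u y) + Ω'.phi (v x) (u y) + evA1 (nD dR) (Ω'.psi (v y) (u x))
        + Ω'.g (v x) (v y)) ∧
  (∀ x y : Q, pMap v (Ω.o x y)
      = evA1 (nD dQ) (Ω'.r (u y) (v x)) + Ω'.l (u x) (v y) + Ω'.o (v x) (v y))

/-- `Ω ≡ Ω'` : the extending structures are equivalent. -/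
def DatumEquiv (dR : R →ₗ[ℂ] R) (dQ : Q →ₗ[ℂ] Q) (m : R →ₗ[ℂ] R →ₗ[ℂ] OP R)
    (Ω Ω' : ExtDatum dR dQ) : Prop :=
  ∃ (u : Q →ₗ[ℂ] R) (v : Q ≃ₗ[ℂ] Q),
    (∀ q, u (dQ q) = dR (u q)) ∧ (∀ q, v (dQ q) = dQ (v q)) ∧
    DatumRel dR dQ m Ω Ω' u (v : Q →ₗ[ℂ] Q)

/-- `Ω ≈ Ω'` : the extending structures are cohomologous (`v = Id`). -/
def DatumCohom (dR : R →ₗ[ℂ] R) (dQ : Q →ₗ[ℂ] Q) (m : R →ₗ[ℂ] R →ₗ[ℂ] OP R)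
    (Ω Ω' : ExtDatum dR dQ) : Prop :=
  ∃ u : Q →ₗ[ℂ] R,
    (∀ q, u (dQ q) = dR (u q)) ∧ DatumRel dR dQ m Ω Ω' u LinearMap.id

end Equivalences

section AuxA
variable {U V W : Type*}
variable [AddCommGroup U] [Module ℂ U] [AddCommGroup V] [Module ℂ V]
variable [AddCommGroup W] [Module ℂ W]

lemma lsh_single (k : ℕ) (w : W) : lsh (single k w) = single (k+1) w := by
  simp [lsh]

lemma pD_single (d : W →ₗ[ℂ] W) (k : ℕ) (w : W) : pD d (single k w) = single k (d w) := by
  simp [pD]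

lemma pMap_single (f : U →ₗ[ℂ] W) (k : ℕ) (u : U) :
    pMap f (single k u) = single k (f u) := by
  simp [pMap]

lemma pMap_apply' (f : U →ₗ[ℂ] W) (p : OP U) (n : ℕ) : pMap f p n = f (p n) := by
  simp [pMap]

lemma evA1_single (A : OP W →ₗ[ℂ] OP W) (k : ℕ) (w : W) :
    evA1 A (single k w) = (A ^ k) (single 0 w) := by
  simp [evA1]

lemma pow_comm_of_comm {A B : OP W →ₗ[ℂ] OP W} (h : ∀ p, A (B p) = B (A p)) (k : ℕ)
    (p : OP W) : (A ^ k) (B p) = B ((A ^ k) p) := by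
  induction k generalizing p with
  | zero => simp
  | succ n ih => simp only [pow_succ, Module.End.mul_apply, h, ih]

lemma lsh_pD (d : W →ₗ[ℂ] W) (p : OP W) : lsh (pD d p) = pD d (lsh p) := by
  have : (lsh ∘ₗ pD d : OP W →ₗ[ℂ] OP W) = pD d ∘ₗ lsh := by
    apply Finsupp.lhom_ext; intro k w
    simp [lsh_single, pD_single]
  exact LinearMap.congr_fun this p

lemma nD_pD (d : W →ₗ[ℂ] W) (p : OP W) : nD d (pD d p) = pD d (nD d p) := by
  simp only [nD, LinearMap.sub_apply, LinearMap.neg_apply, lsh_pD, map_sub, map_neg]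

lemma evA1_lsh (A : OP W →ₗ[ℂ] OP W) (p : OP W) : evA1 A (lsh p) = A (evA1 A p) := by
  have : (evA1 A ∘ₗ lsh : OP W →ₗ[ℂ] OP W) = A ∘ₗ evA1 A := by
    apply Finsupp.lhom_ext; intro k w
    simp [lsh_single, evA1_single, pow_succ', Module.End.mul_apply]
  exact LinearMap.congr_fun this p

lemma evA1_nD_pD (d : W →ₗ[ℂ] W) (p : OP W) :
    evA1 (nD d) (pD d p) = pD d (evA1 (nD d) p) := by
  have : (evA1 (nD d) ∘ₗ pD d : OP W →ₗ[ℂ] OP W) = pD d ∘ₗ evA1 (nD d) := by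
    apply Finsupp.lhom_ext; intro k w
    simp only [LinearMap.comp_apply, pD_single, evA1_single]
    rw [← pD_single d 0 w, pow_comm_of_comm (nD_pD d)]
  exact LinearMap.congr_fun this p

lemma evA1_nD_nD (d : W →ₗ[ℂ] W) (p : OP W) :
    evA1 (nD d) (nD d p) = lsh (evA1 (nD d) p) := by
  have h1 : nD d p = -lsh p - pD d p := rfl
  rw [h1, map_sub, map_neg, evA1_lsh, evA1_nD_pD]
  have h2 : nD d (evA1 (nD d) p) = -lsh (evA1 (nD d) p) - pD d (evA1 (nD d) p) := rfl
  rw [h2]; abel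

lemma evA1_nD_pow (d : W →ₗ[ℂ] W) (k : ℕ) (q : OP W) :
    evA1 (nD d) (((nD d) ^ k) q) = (lsh ^ k) (evA1 (nD d) q) := by
  induction k generalizing q with
  | zero => simp
  | succ n ih =>
      rw [pow_succ', Module.End.mul_apply, evA1_nD_nD, ih, pow_succ', Module.End.mul_apply]

lemma lsh_pow_single (k : ℕ) (w : W) : ((lsh : OP W →ₗ[ℂ] OP W) ^ k) (single 0 w) = single k w := by
  induction k with
  | zero => simp
  | succ n ih => rw [pow_succ', Module.End.mul_apply, ih, lsh_single]

lemma evA1_nD_invol (d : W →ₗ[ℂ] W) (p : OP W) :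
    evA1 (nD d) (evA1 (nD d) p) = p := by
  have : (evA1 (nD d) ∘ₗ evA1 (nD d) : OP W →ₗ[ℂ] OP W) = LinearMap.id := by
    apply Finsupp.lhom_ext; intro k w
    simp only [LinearMap.comp_apply, evA1_single, LinearMap.id_apply]
    rw [evA1_nD_pow, evA1_single, pow_zero, Module.End.one_apply, lsh_pow_single]
  exact LinearMap.congr_fun this p

lemma evA1_nD_shift (d : W →ₗ[ℂ] W) (p : OP W) :
    evA1 (nD d) (lsh p + pD d p) = -lsh (evA1 (nD d) p) := by
  rw [map_add, evA1_lsh, evA1_nD_pD]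
  show -lsh (evA1 (nD d) p) - pD d (evA1 (nD d) p) + pD d (evA1 (nD d) p) = _
  abel

lemma evA1_nD_neglsh (d : W →ₗ[ℂ] W) (p : OP W) :
    evA1 (nD d) (-lsh p) = lsh (evA1 (nD d) p) + pD d (evA1 (nD d) p) := by
  rw [map_neg, evA1_lsh]
  show -(-lsh (evA1 (nD d) p) - pD d (evA1 (nD d) p)) = _
  abel

end AuxA

section AuxB
variable {U W R Q : Type*}
variable [AddCommGroup U] [Module ℂ U] [AddCommGroup W] [Module ℂ W]
variable [AddCommGroup R] [Module ℂ R] [AddCommGroup Q] [Module ℂ Q]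

lemma pMap_id (p : OP U) : pMap (LinearMap.id : U →ₗ[ℂ] U) p = p := by
  ext n; rw [pMap_apply']; rfl

lemma pMap_lsh (f : U →ₗ[ℂ] W) (p : OP U) : pMap f (lsh p) = lsh (pMap f p) := by
  have : (pMap f ∘ₗ lsh : OP U →ₗ[ℂ] OP W) = lsh ∘ₗ pMap f := by
    apply Finsupp.lhom_ext; intro k w
    simp [lsh_single, pMap_single]
  exact LinearMap.congr_fun this p

lemma pMap_pD (f : U →ₗ[ℂ] W) (dU : U →ₗ[ℂ] U) (dW : W →ₗ[ℂ] W)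
    (h : ∀ u, f (dU u) = dW (f u)) (p : OP U) :
    pMap f (pD dU p) = pD dW (pMap f p) := by
  ext n; simp [pMap_apply', pD, h]

lemma pMap_nD (f : U →ₗ[ℂ] W) (dU : U →ₗ[ℂ] U) (dW : W →ₗ[ℂ] W)
    (h : ∀ u, f (dU u) = dW (f u)) (p : OP U) :
    pMap f (nD dU p) = nD dW (pMap f p) := by
  show pMap f (-lsh p - pD dU p) = -lsh (pMap f p) - pD dW (pMap f p)
  rw [map_sub, map_neg, pMap_lsh, pMap_pD f dU dW h]

lemma pMap_evA1_nD (f : U →ₗ[ℂ] W) (dU : U →ₗ[ℂ] U) (dW : W →ₗ[ℂ] W)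
    (h : ∀ u, f (dU u) = dW (f u)) (p : OP U) :
    pMap f (evA1 (nD dU) p) = evA1 (nD dW) (pMap f p) := by
  have key : ∀ (k : ℕ) (q : OP U), pMap f (((nD dU) ^ k) q) = ((nD dW) ^ k) (pMap f q) := by
    intro k
    induction k with
    | zero => simp
    | succ n ih =>
        intro q
        rw [pow_succ', Module.End.mul_apply, pMap_nD f dU dW h, ih, pow_succ',
          Module.End.mul_apply]
  have : (pMap f ∘ₗ evA1 (nD dU) : OP U →ₗ[ℂ] OP W) = evA1 (nD dW) ∘ₗ pMap f := by
    apply Finsupp.lhom_ext; intro k w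
    simp only [LinearMap.comp_apply, evA1_single, pMap_single, key, pMap_single]
  exact LinearMap.congr_fun this p

lemma fstP_inlP (p : OP R) :
    pMap (LinearMap.fst ℂ R Q) (inlP R Q p) = p := by
  ext n; simp [pMap_apply', inlP]

lemma fstP_inrP (q : OP Q) :
    pMap (LinearMap.fst ℂ R Q) (inrP R Q q) = 0 := by
  ext n; simp [pMap_apply', inrP]

lemma sndP_inlP (p : OP R) :
    pMap (LinearMap.snd ℂ R Q) (inlP R Q p) = 0 := by
  ext n; simp [pMap_apply', inlP]

lemma sndP_inrP (q : OP Q) :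
    pMap (LinearMap.snd ℂ R Q) (inrP R Q q) = q := by
  ext n; simp [pMap_apply', inrP]

lemma splitP (p : OP (R × Q)) :
    inlP R Q (pMap (LinearMap.fst ℂ R Q) p) + inrP R Q (pMap (LinearMap.snd ℂ R Q) p) = p := by
  refine Finsupp.ext fun n => ?_
  rw [Finsupp.add_apply]
  show ((pMap (LinearMap.fst ℂ R Q) p) n, 0) + ((0 : R), (pMap (LinearMap.snd ℂ R Q) p) n) = p n
  · rw [pMap_apply', pMap_apply']
    exact Prod.ext (by simp) (by simp)

lemma pair_eq_left {p₁ p₂ : OP R} {q₁ q₂ : OP Q}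
    (h : inlP R Q p₁ + inrP R Q q₁ = inlP R Q p₂ + inrP R Q q₂) : p₁ = p₂ := by
  have := congrArg (pMap (LinearMap.fst ℂ R Q)) h
  simpa [map_add, fstP_inlP, fstP_inrP] using this

lemma pair_eq_right {p₁ p₂ : OP R} {q₁ q₂ : OP Q}
    (h : inlP R Q p₁ + inrP R Q q₁ = inlP R Q p₂ + inrP R Q q₂) : q₁ = q₂ := by
  have := congrArg (pMap (LinearMap.snd ℂ R Q)) h
  simpa [map_add, sndP_inlP, sndP_inrP] using this

/-- The triangular map `(a, x) ↦ (a + u x, v x)`. -/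
def Tlin (u : Q →ₗ[ℂ] R) (v : Q →ₗ[ℂ] Q) : (R × Q) →ₗ[ℂ] (R × Q) :=
  LinearMap.prod (LinearMap.fst ℂ R Q + u ∘ₗ LinearMap.snd ℂ R Q)
    (v ∘ₗ LinearMap.snd ℂ R Q)

lemma Tlin_apply (u : Q →ₗ[ℂ] R) (v : Q →ₗ[ℂ] Q) (a : R) (x : Q) :
    Tlin u v (a, x) = (a + u x, v x) := by
  simp [Tlin]

lemma pMap_T_inl (T : (R × Q) →ₗ[ℂ] (R × Q)) (hT : ∀ c : R, T (c, 0) = (c, 0)) (p : OP R) :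
    pMap T (inlP R Q p) = inlP R Q p := by
  refine Finsupp.ext fun n => ?_
  rw [pMap_apply']
  show T ((inlP R Q p) n) = (inlP R Q p) n
  have : (inlP R Q p) n = (p n, 0) := by simp [inlP]
  rw [this, hT]

lemma pMap_T_inr (T : (R × Q) →ₗ[ℂ] (R × Q)) (u : Q →ₗ[ℂ] R) (v : Q →ₗ[ℂ] Q)
    (hT : ∀ w : Q, T (0, w) = (u w, v w)) (q : OP Q) :
    pMap T (inrP R Q q) = inlP R Q (pMap u q) + inrP R Q (pMap v q) := by
  refine Finsupp.ext fun n => ?_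
  rw [Finsupp.add_apply, pMap_apply']
  show T ((inrP R Q q) n) = (inlP R Q (pMap u q)) n + (inrP R Q (pMap v q)) n
  have h1 : (inrP R Q q) n = ((0 : R), q n) := by simp [inrP]
  have h2 : (inlP R Q (pMap u q)) n = (u (q n), 0) := by simp [inlP, pMap_apply']
  have h3 : (inrP R Q (pMap v q)) n = ((0 : R), v (q n)) := by simp [inrP, pMap_apply']
  rw [h1, h2, h3, hT]
  exact Prod.ext (by simp) (by simp)

/-- The triangular equivalence when `v` is invertible. -/
def Teq (u : Q →ₗ[ℂ] R) (v : Q ≃ₗ[ℂ] Q) : (R × Q) ≃ₗ[ℂ] (R × Q) :=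
  LinearEquiv.ofLinear (Tlin u (v : Q →ₗ[ℂ] Q))
    (Tlin (-(u ∘ₗ (v.symm : Q →ₗ[ℂ] Q))) (v.symm : Q →ₗ[ℂ] Q))
    (by
      apply LinearMap.ext; rintro ⟨a, x⟩
      simp [Tlin_apply, LinearMap.comp_apply])
    (by
      apply LinearMap.ext; rintro ⟨a, x⟩
      simp [Tlin_apply, LinearMap.comp_apply])

lemma Teq_apply (u : Q →ₗ[ℂ] R) (v : Q ≃ₗ[ℂ] Q) (e : R × Q) :
    Teq u v e = Tlin u (v : Q →ₗ[ℂ] Q) e := rfl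

lemma Teq_toLinearMap (u : Q →ₗ[ℂ] R) (v : Q ≃ₗ[ℂ] Q) :
    ((Teq u v : (R × Q) ≃ₗ[ℂ] (R × Q)) : (R × Q) →ₗ[ℂ] (R × Q)) = Tlin u (v : Q →ₗ[ℂ] Q) := rfl

end AuxB

section AuxC
variable {R Q : Type*} [AddCommGroup R] [Module ℂ R] [AddCommGroup Q] [Module ℂ Q]
variable (dR : R →ₗ[ℂ] R) (dQ : Q →ₗ[ℂ] Q) (m : R →ₗ[ℂ] R →ₗ[ℂ] OP R)

lemma mult_of_rel (Ω Ω' : ExtDatum dR dQ) (u : Q →ₗ[ℂ] R) (v : Q →ₗ[ℂ] Q)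
    (h : DatumRel dR dQ m Ω Ω' u v) (e₁ e₂ : R × Q) :
    uprod dR dQ Ω' m (Tlin u v e₁) (Tlin u v e₂)
      = pMap (Tlin u v) (uprod dR dQ Ω m e₁ e₂) := by
  obtain ⟨a, x⟩ := e₁; obtain ⟨b, y⟩ := e₂
  obtain ⟨h1, h2, h3, h4, h5, h6⟩ := h
  rw [Tlin_apply, Tlin_apply, uprod_apply, uprod_apply]
  have hinl := pMap_T_inl (Tlin u v) (fun c => by rw [Tlin_apply]; simp)
  have hinr := pMap_T_inr (Tlin u v) u v (fun w => by rw [Tlin_apply]; simp)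
  conv_rhs => rw [map_add, hinl, hinr]
  dsimp only
  have HR :
      m (a + u x) (b + u y) + Ω'.phi (v x) (b + u y)
        + evA1 (nD dR) (Ω'.psi (v y) (a + u x)) + Ω'.g (v x) (v y)
      = (m a b + Ω.phi x b + evA1 (nD dR) (Ω.psi y a) + Ω.g x y)
        + pMap u (Ω.o x y + Ω.l a y + evA1 (nD dQ) (Ω.r b x)) := by
    simp only [map_add, LinearMap.add_apply]
    rw [eq_sub_of_add_eq (h1 a y), eq_sub_of_add_eq (h3 b x), eq_sub_of_add_eq (h5 x y)]
    abel
  have HQ :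
      Ω'.o (v x) (v y) + Ω'.l (a + u x) (v y) + evA1 (nD dQ) (Ω'.r (b + u y) (v x))
      = pMap v (Ω.o x y + Ω.l a y + evA1 (nD dQ) (Ω.r b x)) := by
    simp only [map_add, LinearMap.add_apply]
    rw [h2 a y, h4 b x, h6 x y]
    abel
  rw [HR, HQ, map_add]
  abel

lemma iso_of_datumEquiv (Ω Ω' : ExtDatum dR dQ)
    (hD : DatumEquiv dR dQ m Ω Ω') :
    ∃ T : (R × Q) ≃ₗ[ℂ] (R × Q),
      IsIsoLSCA (dR.prodMap dQ) (uprod dR dQ Ω m) (uprod dR dQ Ω' m) T ∧ Stab T := by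
  obtain ⟨u, v, hu, hv, hrel⟩ := hD
  refine ⟨Teq u v, ⟨?_, ?_⟩, ?_⟩
  · rintro ⟨a, x⟩
    have h1 : (dR.prodMap dQ) (a, x) = (dR a, dQ x) := rfl
    rw [Teq_apply, Teq_apply, h1, Tlin_apply, Tlin_apply]
    have h2 : (dR.prodMap dQ) (a + u x, (v : Q →ₗ[ℂ] Q) x)
        = (dR (a + u x), dQ ((v : Q →ₗ[ℂ] Q) x)) := rfl
    rw [h2, map_add]
    have h3 : (v : Q →ₗ[ℂ] Q) (dQ x) = dQ ((v : Q →ₗ[ℂ] Q) x) := hv x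
    rw [h3, hu x]
  · intro e₁ e₂
    rw [Teq_apply, Teq_apply, Teq_toLinearMap]
    exact mult_of_rel dR dQ m Ω Ω' u (v : Q →ₗ[ℂ] Q) hrel e₁ e₂
  · intro a
    rw [Teq_apply, Tlin_apply]
    simp

end AuxC

section AuxD
variable {R Q : Type*} [AddCommGroup R] [Module ℂ R] [AddCommGroup Q] [Module ℂ Q]
variable (dR : R →ₗ[ℂ] R) (dQ : Q →ₗ[ℂ] Q) (m : R →ₗ[ℂ] R →ₗ[ℂ] OP R)

lemma datumEquiv_of_iso (Ω Ω' : ExtDatum dR dQ) (T : (R × Q) ≃ₗ[ℂ] (R × Q))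
    (hT : IsIsoLSCA (dR.prodMap dQ) (uprod dR dQ Ω m) (uprod dR dQ Ω' m) T)
    (hS : Stab T) : DatumEquiv dR dQ m Ω Ω' := by
  set u : Q →ₗ[ℂ] R :=
    LinearMap.fst ℂ R Q ∘ₗ (T : (R × Q) →ₗ[ℂ] (R × Q)) ∘ₗ LinearMap.inr ℂ R Q with hu_def
  set vl : Q →ₗ[ℂ] Q :=
    LinearMap.snd ℂ R Q ∘ₗ (T : (R × Q) →ₗ[ℂ] (R × Q)) ∘ₗ LinearMap.inr ℂ R Q with hv_def
  have hT0 : ∀ w : Q, T (0, w) = (u w, vl w) := fun w => rfl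
  have hbij : Function.Bijective vl := by
    constructor
    · intro x₁ x₂ hx
      have e2 : vl (x₁ - x₂) = 0 := by rw [map_sub, hx, sub_self]
      have e3 : T (0, x₁ - x₂) = T (u (x₁ - x₂), 0) := by rw [hS, hT0, e2]
      have e4 := T.injective e3
      exact sub_eq_zero.mp (congrArg Prod.snd e4)
    · intro y
      obtain ⟨e, he⟩ := T.surjective (0, y)
      obtain ⟨e1, e2⟩ := e
      have : ((e1, e2) : R × Q) = (e1, 0) + (0, e2) := by simp
      rw [this, map_add, hS e1, hT0 e2] at he
      exact ⟨e2, by have := congrArg Prod.snd he; simpa using this⟩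
  have hinl := pMap_T_inl (T : (R × Q) →ₗ[ℂ] (R × Q)) (fun c => hS c)
  have hinr := pMap_T_inr (T : (R × Q) →ₗ[ℂ] (R × Q)) u vl (fun w => hT0 w)
  refine ⟨u, LinearEquiv.ofBijective vl hbij, ?_, ?_, ?_, ?_, ?_, ?_, ?_, ?_⟩
  · -- u ∘ dQ = dR ∘ u
    intro q
    have h := hT.dcomm (0, q)
    rw [show (dR.prodMap dQ) ((0 : R), q) = ((0 : R), dQ q) from by simp] at h
    rw [hT0, hT0] at h
    rw [show (dR.prodMap dQ) (u q, vl q) = (dR (u q), dQ (vl q)) from rfl] at h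
    exact congrArg Prod.fst h
  · -- vl ∘ dQ = dQ ∘ vl
    intro q
    have h := hT.dcomm (0, q)
    rw [show (dR.prodMap dQ) ((0 : R), q) = ((0 : R), dQ q) from by simp] at h
    rw [hT0, hT0] at h
    rw [show (dR.prodMap dQ) (u q, vl q) = (dR (u q), dQ (vl q)) from rfl] at h
    exact congrArg Prod.snd h
  · -- relation (1)
    intro a y
    have H := hT.mult (a, 0) (0, y)
    rw [hS a, hT0 y, uprod_apply, uprod_apply] at H
    dsimp only at H
    simp only [map_zero, LinearMap.zero_apply, add_zero, zero_add] at H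
    rw [map_add (pMap (T : (R × Q) →ₗ[ℂ] (R × Q))), hinl, hinr] at H
    have HL := congrArg (pMap (LinearMap.fst ℂ R Q)) H
    simp only [map_add, fstP_inlP, fstP_inrP, add_zero, zero_add] at HL
    exact HL.symm
  · -- relation (2)
    intro a y
    have H := hT.mult (a, 0) (0, y)
    rw [hS a, hT0 y, uprod_apply, uprod_apply] at H
    dsimp only at H
    simp only [map_zero, LinearMap.zero_apply, add_zero, zero_add] at H
    rw [map_add (pMap (T : (R × Q) →ₗ[ℂ] (R × Q))), hinl, hinr] at H
    have HQ := congrArg (pMap (LinearMap.snd ℂ R Q)) H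
    simp only [map_add, sndP_inlP, sndP_inrP, add_zero, zero_add] at HQ
    exact HQ.symm
  · -- relation (3)
    intro b x
    have H := hT.mult (0, x) (b, 0)
    rw [hT0 x, hS b, uprod_apply, uprod_apply] at H
    dsimp only at H
    simp only [map_zero, LinearMap.zero_apply, add_zero, zero_add] at H
    rw [map_add (pMap (T : (R × Q) →ₗ[ℂ] (R × Q))), hinl, hinr] at H
    have HL := congrArg (pMap (LinearMap.fst ℂ R Q)) H
    simp only [map_add, fstP_inlP, fstP_inrP, add_zero, zero_add] at HL
    exact HL.symm
  · -- relation (4)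
    intro b x
    have H := hT.mult (0, x) (b, 0)
    rw [hT0 x, hS b, uprod_apply, uprod_apply] at H
    dsimp only at H
    simp only [map_zero, LinearMap.zero_apply, add_zero, zero_add] at H
    rw [map_add (pMap (T : (R × Q) →ₗ[ℂ] (R × Q))), hinl, hinr] at H
    have HQ := congrArg (pMap (LinearMap.snd ℂ R Q)) H
    simp only [map_add, sndP_inlP, sndP_inrP, add_zero, zero_add] at HQ
    exact HQ.symm
  · -- relation (5)
    intro x y
    have H := hT.mult (0, x) (0, y)
    rw [hT0 x, hT0 y, uprod_apply, uprod_apply] at H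
    dsimp only at H
    simp only [map_zero, LinearMap.zero_apply, add_zero, zero_add] at H
    rw [map_add (pMap (T : (R × Q) →ₗ[ℂ] (R × Q))), hinl, hinr] at H
    have HL := congrArg (pMap (LinearMap.fst ℂ R Q)) H
    simp only [map_add, fstP_inlP, fstP_inrP, add_zero, zero_add] at HL
    exact HL.symm
  · -- relation (6)
    intro x y
    have H := hT.mult (0, x) (0, y)
    rw [hT0 x, hT0 y, uprod_apply, uprod_apply] at H
    dsimp only at H
    simp only [map_zero, LinearMap.zero_apply, add_zero, zero_add] at H
    rw [map_add (pMap (T : (R × Q) →ₗ[ℂ] (R × Q))), hinl, hinr] at H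
    have HQ := congrArg (pMap (LinearMap.snd ℂ R Q)) H
    simp only [map_add, sndP_inlP, sndP_inrP, add_zero, zero_add] at HQ
    show pMap vl (Ω.o x y) = evA1 (nD dQ) (Ω'.r (u y) (vl x)) + Ω'.l (u x) (vl y)
      + Ω'.o (vl x) (vl y)
    rw [← HQ]
    abel

end AuxD

section AuxE
variable {R Q : Type*} [AddCommGroup R] [Module ℂ R] [AddCommGroup Q] [Module ℂ Q]
variable (dR : R →ₗ[ℂ] R) (dQ : Q →ₗ[ℂ] Q) (m : R →ₗ[ℂ] R →ₗ[ℂ] OP R)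

/-- Reconstruction of an extending datum from an algebra structure on `R ⊕ Q`
containing `R` as a subalgebra. -/
def recDatum (S : (R × Q) →ₗ[ℂ] (R × Q) →ₗ[ℂ] OP (R × Q))
    (hconf : ConfBilin (dR.prodMap dQ) (dR.prodMap dQ) (dR.prodMap dQ) S) :
    ExtDatum dR dQ where
  phi := (S.compl₁₂ (LinearMap.inr ℂ R Q) (LinearMap.inl ℂ R Q)).compr₂
    (pMap (LinearMap.fst ℂ R Q))
  psi := ((S.compl₁₂ (LinearMap.inl ℂ R Q) (LinearMap.inr ℂ R Q)).compr₂
    (evA1 (nD dR) ∘ₗ pMap (LinearMap.fst ℂ R Q))).flip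
  l := (S.compl₁₂ (LinearMap.inl ℂ R Q) (LinearMap.inr ℂ R Q)).compr₂
    (pMap (LinearMap.snd ℂ R Q))
  r := ((S.compl₁₂ (LinearMap.inr ℂ R Q) (LinearMap.inl ℂ R Q)).compr₂
    (evA1 (nD dQ) ∘ₗ pMap (LinearMap.snd ℂ R Q))).flip
  g := (S.compl₁₂ (LinearMap.inr ℂ R Q) (LinearMap.inr ℂ R Q)).compr₂
    (pMap (LinearMap.fst ℂ R Q))
  o := (S.compl₁₂ (LinearMap.inr ℂ R Q) (LinearMap.inr ℂ R Q)).compr₂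
    (pMap (LinearMap.snd ℂ R Q))
  hphi := by
    constructor
    · intro x b
      simp only [LinearMap.compr₂_apply, LinearMap.compl₁₂_apply, LinearMap.inl_apply,
        LinearMap.inr_apply, LinearMap.flip_apply, LinearMap.coe_comp, Function.comp_apply]
      rw [show ((0 : R), dQ x) = (dR.prodMap dQ) ((0 : R), x) from by simp,
        hconf.dleft, map_neg, pMap_lsh]
    · intro x b
      simp only [LinearMap.compr₂_apply, LinearMap.compl₁₂_apply, LinearMap.inl_apply,
        LinearMap.inr_apply, LinearMap.flip_apply, LinearMap.coe_comp, Function.comp_apply]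
      rw [show ((dR b, (0 : Q)) : R × Q) = (dR.prodMap dQ) (b, (0 : Q)) from by simp,
        hconf.dright, map_add, pMap_lsh,
        pMap_pD (LinearMap.fst ℂ R Q) (dR.prodMap dQ) dR (fun e => rfl)]
  hpsi := by
    constructor
    · intro x a
      simp only [LinearMap.compr₂_apply, LinearMap.compl₁₂_apply, LinearMap.inl_apply,
        LinearMap.inr_apply, LinearMap.flip_apply, LinearMap.coe_comp, Function.comp_apply]
      rw [show ((0 : R), dQ x) = (dR.prodMap dQ) ((0 : R), x) from by simp,
        hconf.dright, map_add, pMap_lsh,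
        pMap_pD (LinearMap.fst ℂ R Q) (dR.prodMap dQ) dR (fun e => rfl), evA1_nD_shift]
    · intro x a
      simp only [LinearMap.compr₂_apply, LinearMap.compl₁₂_apply, LinearMap.inl_apply,
        LinearMap.inr_apply, LinearMap.flip_apply, LinearMap.coe_comp, Function.comp_apply]
      rw [show ((dR a, (0 : Q)) : R × Q) = (dR.prodMap dQ) (a, (0 : Q)) from by simp,
        hconf.dleft, map_neg, pMap_lsh, evA1_nD_neglsh]
  hl := by
    constructor
    · intro a y
      simp only [LinearMap.compr₂_apply, LinearMap.compl₁₂_apply, LinearMap.inl_apply,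
        LinearMap.inr_apply, LinearMap.flip_apply, LinearMap.coe_comp, Function.comp_apply]
      rw [show ((dR a, (0 : Q)) : R × Q) = (dR.prodMap dQ) (a, (0 : Q)) from by simp,
        hconf.dleft, map_neg, pMap_lsh]
    · intro a y
      simp only [LinearMap.compr₂_apply, LinearMap.compl₁₂_apply, LinearMap.inl_apply,
        LinearMap.inr_apply, LinearMap.flip_apply, LinearMap.coe_comp, Function.comp_apply]
      rw [show ((0 : R), dQ y) = (dR.prodMap dQ) ((0 : R), y) from by simp,
        hconf.dright, map_add, pMap_lsh,
        pMap_pD (LinearMap.snd ℂ R Q) (dR.prodMap dQ) dQ (fun e => rfl)]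
  hr := by
    constructor
    · intro a x
      simp only [LinearMap.compr₂_apply, LinearMap.compl₁₂_apply, LinearMap.inl_apply,
        LinearMap.inr_apply, LinearMap.flip_apply, LinearMap.coe_comp, Function.comp_apply]
      rw [show ((dR a, (0 : Q)) : R × Q) = (dR.prodMap dQ) (a, (0 : Q)) from by simp,
        hconf.dright, map_add, pMap_lsh,
        pMap_pD (LinearMap.snd ℂ R Q) (dR.prodMap dQ) dQ (fun e => rfl), evA1_nD_shift]
    · intro a x
      simp only [LinearMap.compr₂_apply, LinearMap.compl₁₂_apply, LinearMap.inl_apply,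
        LinearMap.inr_apply, LinearMap.flip_apply, LinearMap.coe_comp, Function.comp_apply]
      rw [show ((0 : R), dQ x) = (dR.prodMap dQ) ((0 : R), x) from by simp,
        hconf.dleft, map_neg, pMap_lsh, evA1_nD_neglsh]
  hg := by
    constructor
    · intro x y
      simp only [LinearMap.compr₂_apply, LinearMap.compl₁₂_apply, LinearMap.inl_apply,
        LinearMap.inr_apply, LinearMap.flip_apply, LinearMap.coe_comp, Function.comp_apply]
      rw [show ((0 : R), dQ x) = (dR.prodMap dQ) ((0 : R), x) from by simp,
        hconf.dleft, map_neg, pMap_lsh]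
    · intro x y
      simp only [LinearMap.compr₂_apply, LinearMap.compl₁₂_apply, LinearMap.inl_apply,
        LinearMap.inr_apply, LinearMap.flip_apply, LinearMap.coe_comp, Function.comp_apply]
      rw [show ((0 : R), dQ y) = (dR.prodMap dQ) ((0 : R), y) from by simp,
        hconf.dright, map_add, pMap_lsh,
        pMap_pD (LinearMap.fst ℂ R Q) (dR.prodMap dQ) dR (fun e => rfl)]
  ho := by
    constructor
    · intro x y
      simp only [LinearMap.compr₂_apply, LinearMap.compl₁₂_apply, LinearMap.inl_apply,
        LinearMap.inr_apply, LinearMap.flip_apply, LinearMap.coe_comp, Function.comp_apply]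
      rw [show ((0 : R), dQ x) = (dR.prodMap dQ) ((0 : R), x) from by simp,
        hconf.dleft, map_neg, pMap_lsh]
    · intro x y
      simp only [LinearMap.compr₂_apply, LinearMap.compl₁₂_apply, LinearMap.inl_apply,
        LinearMap.inr_apply, LinearMap.flip_apply, LinearMap.coe_comp, Function.comp_apply]
      rw [show ((0 : R), dQ y) = (dR.prodMap dQ) ((0 : R), y) from by simp,
        hconf.dright, map_add, pMap_lsh,
        pMap_pD (LinearMap.snd ℂ R Q) (dR.prodMap dQ) dQ (fun e => rfl)]

lemma uprod_recDatum (S : (R × Q) →ₗ[ℂ] (R × Q) →ₗ[ℂ] OP (R × Q))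
    (hconf : ConfBilin (dR.prodMap dQ) (dR.prodMap dQ) (dR.prodMap dQ) S)
    (hres : ∀ a b : R, S (a, 0) (b, 0) = inlP R Q (m a b)) :
    uprod dR dQ (recDatum dR dQ S hconf) m = S := by
  apply LinearMap.ext; rintro ⟨a, x⟩
  apply LinearMap.ext; rintro ⟨b, y⟩
  rw [uprod_apply]
  dsimp only
  simp only [recDatum, LinearMap.compr₂_apply, LinearMap.compl₁₂_apply, LinearMap.inl_apply,
    LinearMap.inr_apply, LinearMap.flip_apply, LinearMap.coe_comp, Function.comp_apply,
    evA1_nD_invol]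
  have hdec : S (a, x) (b, y)
      = S (a, 0) (b, 0) + S (a, 0) (0, y) + S (0, x) (b, 0) + S (0, x) (0, y) := by
    have h1 : ((a, x) : R × Q) = (a, 0) + (0, x) := by simp
    have h2 : ((b, y) : R × Q) = (b, 0) + (0, y) := by simp
    rw [h1, h2]
    simp only [map_add, LinearMap.add_apply]
    abel
  conv_rhs => rw [hdec, hres a b, ← splitP (S (a, 0) ((0 : R), y)),
    ← splitP (S ((0 : R), x) (b, 0)), ← splitP (S ((0 : R), x) ((0 : R), y))]
  simp only [map_add]
  abel

end AuxE

section AuxF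
variable {E : Type*} [AddCommGroup E] [Module ℂ E]

lemma iso_refl (dE : E →ₗ[ℂ] E) (m₀ : E →ₗ[ℂ] E →ₗ[ℂ] OP E) :
    IsIsoLSCA dE m₀ m₀ (LinearEquiv.refl ℂ E) := by
  constructor
  · intro e; rfl
  · intro p q
    refine Finsupp.ext fun n => ?_
    rw [pMap_apply']
    rfl

lemma iso_symm (dE : E →ₗ[ℂ] E) (m₁ m₂ : E →ₗ[ℂ] E →ₗ[ℂ] OP E) (T : E ≃ₗ[ℂ] E)
    (h : IsIsoLSCA dE m₁ m₂ T) : IsIsoLSCA dE m₂ m₁ T.symm := by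
  constructor
  · intro e
    have h1 := h.dcomm (T.symm e)
    rw [T.apply_symm_apply] at h1
    calc T.symm (dE e) = T.symm (T (dE (T.symm e))) := by rw [h1]
      _ = dE (T.symm e) := T.symm_apply_apply _
  · intro p q
    have h1 := h.mult (T.symm p) (T.symm q)
    rw [T.apply_symm_apply, T.apply_symm_apply] at h1
    rw [h1]
    refine Finsupp.ext fun n => ?_
    rw [pMap_apply', pMap_apply']
    exact (T.symm_apply_apply _).symm

lemma iso_trans (dE : E →ₗ[ℂ] E) (m₁ m₂ m₃ : E →ₗ[ℂ] E →ₗ[ℂ] OP E) (T₁ T₂ : E ≃ₗ[ℂ] E)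
    (h₁ : IsIsoLSCA dE m₁ m₂ T₁) (h₂ : IsIsoLSCA dE m₂ m₃ T₂) :
    IsIsoLSCA dE m₁ m₃ (T₁.trans T₂) := by
  constructor
  · intro e
    rw [LinearEquiv.trans_apply, LinearEquiv.trans_apply, h₁.dcomm, h₂.dcomm]
  · intro p q
    rw [LinearEquiv.trans_apply, LinearEquiv.trans_apply, h₂.mult, h₁.mult]
    refine Finsupp.ext fun n => ?_
    rw [pMap_apply', pMap_apply', pMap_apply']
    rfl

end AuxF

section AuxG
variable {R Q : Type*} [AddCommGroup R] [Module ℂ R] [AddCommGroup Q] [Module ℂ Q]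

lemma isoRel_equivalence (dE : (R × Q) →ₗ[ℂ] (R × Q))
    (P : ((R × Q) →ₗ[ℂ] (R × Q) →ₗ[ℂ] OP (R × Q)) → Prop) :
    Equivalence (fun S S' : {mE // P mE} =>
      ∃ T : (R × Q) ≃ₗ[ℂ] (R × Q), IsIsoLSCA dE S.val S'.val T ∧ Stab T) := by
  constructor
  · intro S
    exact ⟨LinearEquiv.refl ℂ (R × Q), iso_refl dE S.val, fun a => rfl⟩
  · rintro S S' ⟨T, hI, hSt⟩
    exact ⟨T.symm, iso_symm dE _ _ T hI,
      fun a => T.injective (by rw [T.apply_symm_apply, hSt a])⟩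
  · rintro S₁ S₂ S₃ ⟨T₁, h₁, s₁⟩ ⟨T₂, h₂, s₂⟩
    exact ⟨T₁.trans T₂, iso_trans dE _ _ _ T₁ T₂ h₁ h₂,
      fun a => by rw [LinearEquiv.trans_apply, s₁ a, s₂ a]⟩

end AuxG

-- MORE_AUX

/-- **Theorem 3.12 (i).**  Let `R` be a left-symmetric conformal algebra, `Q` a ℂ[∂]-module
and `E = R ⊕ Q`.  The assignment `Ω ↦ (R ♮ Q, ·_λ·)` induces a bijection
`𝓗²_R(Q,R) = 𝔏(R,Q)/≡  →  CExtd(E,R)`, where `CExtd(E,R)` is the set of left-symmetric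
conformal algebra structures on `E` containing `R` as a subalgebra, modulo isomorphisms
stabilizing `R`. -/
theorem extending_structures_classify
    {R Q : Type*} [AddCommGroup R] [Module ℂ R] [AddCommGroup Q] [Module ℂ Q]
    (dR : R →ₗ[ℂ] R) (dQ : Q →ₗ[ℂ] Q)
    (m : R →ₗ[ℂ] R →ₗ[ℂ] OP R) (hm : IsLSCA dR m) :
    ∃ Φ : Quot (fun Ω Ω' : {Ω : ExtDatum dR dQ //
            IsLSCA (dR.prodMap dQ) (uprod dR dQ Ω m)} =>
          DatumEquiv dR dQ m Ω.val Ω'.val) →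
        Quot (fun S S' : {mE : (R × Q) →ₗ[ℂ] (R × Q) →ₗ[ℂ] OP (R × Q) //
            IsLSCA (dR.prodMap dQ) mE ∧ ∀ a b : R, mE (a, 0) (b, 0) = inlP R Q (m a b)} =>
          ∃ T : (R × Q) ≃ₗ[ℂ] (R × Q), IsIsoLSCA (dR.prodMap dQ) S.val S'.val T ∧ Stab T),
      Function.Bijective Φ ∧
      ∀ Ω : {Ω : ExtDatum dR dQ // IsLSCA (dR.prodMap dQ) (uprod dR dQ Ω m)},
        Φ (Quot.mk _ Ω)
          = Quot.mk _ ⟨uprod dR dQ Ω.val m, Ω.property, uprod_res dR dQ Ω.val m⟩ := by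
  classical
  refine ⟨Quot.lift
      (fun Ω : {Ω : ExtDatum dR dQ // IsLSCA (dR.prodMap dQ) (uprod dR dQ Ω m)} =>
        Quot.mk _ (⟨uprod dR dQ Ω.val m, Ω.property, uprod_res dR dQ Ω.val m⟩ :
          {mE : (R × Q) →ₗ[ℂ] (R × Q) →ₗ[ℂ] OP (R × Q) //
            IsLSCA (dR.prodMap dQ) mE ∧ ∀ a b : R, mE (a, 0) (b, 0) = inlP R Q (m a b)}))
      ?_, ⟨?_, ?_⟩, fun Ω => rfl⟩
  · -- well-definedness
    intro Ω₁ Ω₂ hE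
    exact Quot.sound (iso_of_datumEquiv dR dQ m Ω₁.val Ω₂.val hE)
  · -- injectivity
    intro q₁ q₂
    induction q₁ using Quot.ind with | _ Ω₁ => ?_
    induction q₂ using Quot.ind with | _ Ω₂ => ?_
    intro h
    apply Quot.sound
    have h' := Quot.eq.mp h
    have hrel := ((isoRel_equivalence (dR.prodMap dQ) _).eqvGen_iff).mp h'
    obtain ⟨T, hIso, hStab⟩ := hrel
    exact datumEquiv_of_iso dR dQ m Ω₁.val Ω₂.val T hIso hStab
  · -- surjectivity
    intro s
    induction s using Quot.ind with | _ S => ?_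
    have hup := uprod_recDatum dR dQ m S.val S.property.1.conf S.property.2
    refine ⟨Quot.mk _ ⟨recDatum dR dQ S.val S.property.1.conf, by
      rw [hup]; exact S.property.1⟩, ?_⟩
    exact congrArg (Quot.mk _) (Subtype.ext hup)
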